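/- Let every function in F be continuous, let φ be a bounded L_F-sentence, and let δ ≥ 0. Then de(φ^{+δ}) is true if and only if α(φ) ≥ δ. -/

import Mathlib

/-! Syntax and semantics of bounded first-order sentences over ℝ in a signature `S`
of real-valued functions containing 0, negation, addition, absolute value and all
rational constants. -/

/-- A signature: for each arity `n`, a set of functions `(Fin n → ℝ) → ℝ`, required to
contain the constant `0`, unary negation, addition, the absolute value, and all
rational constants. -/
structure Sig : Type 1 where
  mem : ∀ n : ℕ, Set ((Fin n → ℝ) → ℝ)
  zero_mem : (fun _ : Fin 0 → ℝ => (0 : ℝ)) ∈ mem 0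
  neg_mem : (fun v : Fin 1 → ℝ => -(v 0)) ∈ mem 1
  add_mem : (fun v : Fin 2 → ℝ => v 0 + v 1) ∈ mem 2
  abs_mem : (fun v : Fin 1 → ℝ => |v 0|) ∈ mem 1
  rat_mem : ∀ q : ℚ, (fun _ : Fin 0 → ℝ => (q : ℝ)) ∈ mem 0

/-- Terms: variables (indexed by ℕ) and applications of functions of the signature. -/
inductive RTerm (S : Sig) : Type
  | var : ℕ → RTerm S
  | app : (k : ℕ) → (f : (Fin k → ℝ) → ℝ) → f ∈ S.mem k → (Fin k → RTerm S) → RTerm S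

variable {S : Sig}

/-- Value of a term under an assignment of the variables. -/
noncomputable def RTerm.eval (σ : ℕ → ℝ) : RTerm S → ℝ
  | .var n => σ n
  | .app _ f _ ts => f fun i => (ts i).eval σ

/-- The variable `x` occurs in the term. -/
def RTerm.Occurs (x : ℕ) : RTerm S → Prop
  | .var n => n = x
  | .app _ _ _ ts => ∃ i, (ts i).Occurs x

/-- The term `-t`, built from the unary negation of the signature. -/
def RTerm.negT (t : RTerm S) : RTerm S :=
  .app 1 (fun v : Fin 1 → ℝ => -(v 0)) S.neg_mem fun _ => t

/-- Bounded `L_F`-formulas.  An atom `gt t c` (resp. `ge t c`) is the inequality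
`t > c` (resp. `t ≥ c`).  Genuine `L_F`-formulas have all atom thresholds `c = 0`
(`RFormula.Zeroed`); nonzero thresholds arise from the δ-perturbations. -/
inductive RFormula (S : Sig) : Type
  | gt : RTerm S → ℝ → RFormula S
  | ge : RTerm S → ℝ → RFormula S
  | and : RFormula S → RFormula S → RFormula S
  | or : RFormula S → RFormula S → RFormula S
  | ex : ℕ → RTerm S → RTerm S → RFormula S → RFormula S
  | all : ℕ → RTerm S → RTerm S → RFormula S → RFormula S

/-- Standard semantics over ℝ; the bound `[u,v]` is read as the closed interval
between `min u v` and `max u v` (`Set.uIcc`). -/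
def RFormula.Holds : RFormula S → (ℕ → ℝ) → Prop
  | .gt t c, σ => t.eval σ > c
  | .ge t c, σ => t.eval σ ≥ c
  | .and φ ψ, σ => φ.Holds σ ∧ ψ.Holds σ
  | .or φ ψ, σ => φ.Holds σ ∨ ψ.Holds σ
  | .ex x u v φ, σ => ∃ a ∈ Set.uIcc (u.eval σ) (v.eval σ), φ.Holds (Function.update σ x a)
  | .all x u v φ, σ => ∀ a ∈ Set.uIcc (u.eval σ) (v.eval σ), φ.Holds (Function.update σ x a)

/-- Truth of a (closed) formula: it holds under the (irrelevant) zero assignment. -/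
def RFormula.IsTrue (φ : RFormula S) : Prop := φ.Holds fun _ => 0

/-- The variable `x` occurs free in the formula. -/
def RFormula.FreeIn (x : ℕ) : RFormula S → Prop
  | .gt t _ => t.Occurs x
  | .ge t _ => t.Occurs x
  | .and φ ψ => φ.FreeIn x ∨ ψ.FreeIn x
  | .or φ ψ => φ.FreeIn x ∨ ψ.FreeIn x
  | .ex y u v φ => u.Occurs x ∨ v.Occurs x ∨ (x ≠ y ∧ φ.FreeIn x)
  | .all y u v φ => u.Occurs x ∨ v.Occurs x ∨ (x ≠ y ∧ φ.FreeIn x)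

/-- A sentence has no free variables. -/
def RFormula.IsSentence (φ : RFormula S) : Prop := ∀ x, ¬ φ.FreeIn x

/-- The bound terms of each quantifier do not involve the quantified variable. -/
def RFormula.BoundsOK : RFormula S → Prop
  | .gt _ _ => True
  | .ge _ _ => True
  | .and φ ψ => φ.BoundsOK ∧ ψ.BoundsOK
  | .or φ ψ => φ.BoundsOK ∧ ψ.BoundsOK
  | .ex x u v φ => ¬ u.Occurs x ∧ ¬ v.Occurs x ∧ φ.BoundsOK
  | .all x u v φ => ¬ u.Occurs x ∧ ¬ v.Occurs x ∧ φ.BoundsOK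

/-- All atom thresholds are `0`, i.e. all atoms are of the form `t > 0` or `t ≥ 0`. -/
def RFormula.Zeroed : RFormula S → Prop
  | .gt _ c => c = 0
  | .ge _ c => c = 0
  | .and φ ψ => φ.Zeroed ∧ ψ.Zeroed
  | .or φ ψ => φ.Zeroed ∧ ψ.Zeroed
  | .ex _ _ _ φ => φ.Zeroed
  | .all _ _ _ φ => φ.Zeroed

/-- A bounded `L_F`-sentence: atoms `t > 0` / `t ≥ 0`, quantifier bounds not involving
the quantified variable, and no free variables. -/
def RFormula.IsBoundedSentence (φ : RFormula S) : Prop :=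
  φ.Zeroed ∧ φ.BoundsOK ∧ φ.IsSentence

/-- δ-strengthening `φ^{+δ}`: every atom `t > 0` becomes `t > δ`, every `t ≥ 0`
becomes `t ≥ δ` (quantifier bounds unchanged). -/
def RFormula.strengthen (δ : ℝ) : RFormula S → RFormula S
  | .gt t c => .gt t (c + δ)
  | .ge t c => .ge t (c + δ)
  | .and φ ψ => .and (φ.strengthen δ) (ψ.strengthen δ)
  | .or φ ψ => .or (φ.strengthen δ) (ψ.strengthen δ)
  | .ex x u v φ => .ex x u v (φ.strengthen δ)
  | .all x u v φ => .all x u v (φ.strengthen δ)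

/-- δ-weakening `φ^{-δ}`: every atom `t > 0` becomes `t > -δ`, every `t ≥ 0`
becomes `t ≥ -δ` (quantifier bounds unchanged). -/
def RFormula.weaken (δ : ℝ) : RFormula S → RFormula S
  | .gt t c => .gt t (c - δ)
  | .ge t c => .ge t (c - δ)
  | .and φ ψ => .and (φ.weaken δ) (ψ.weaken δ)
  | .or φ ψ => .or (φ.weaken δ) (ψ.weaken δ)
  | .ex x u v φ => .ex x u v (φ.weaken δ)
  | .all x u v φ => .all x u v (φ.weaken δ)

/-- Syntactic negation: `t > c ↦ -t ≥ -c`, `t ≥ c ↦ -t > -c`, swapping `∧`/`∨` and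
`∃`/`∀` (quantifier bounds unchanged).  On zero-threshold atoms this is exactly
`t > 0 ↦ -t ≥ 0` and `t ≥ 0 ↦ -t > 0`. -/
def RFormula.neg : RFormula S → RFormula S
  | .gt t c => .ge t.negT (-c)
  | .ge t c => .gt t.negT (-c)
  | .and φ ψ => .or φ.neg ψ.neg
  | .or φ ψ => .and φ.neg ψ.neg
  | .ex x u v φ => .all x u v φ.neg
  | .all x u v φ => .ex x u v φ.neg

/-- Strictification `st(φ)`: every nonstrict atom becomes strict. -/
def RFormula.strict : RFormula S → RFormula S
  | .gt t c => .gt t c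
  | .ge t c => .gt t c
  | .and φ ψ => .and φ.strict ψ.strict
  | .or φ ψ => .or φ.strict ψ.strict
  | .ex x u v φ => .ex x u v φ.strict
  | .all x u v φ => .all x u v φ.strict

/-- Destrictification `de(φ)`: every strict atom becomes nonstrict. -/
def RFormula.destrict : RFormula S → RFormula S
  | .gt t c => .ge t c
  | .ge t c => .ge t c
  | .and φ ψ => .and φ.destrict ψ.destrict
  | .or φ ψ => .or φ.destrict ψ.destrict
  | .ex x u v φ => .ex x u v φ.destrict
  | .all x u v φ => .all x u v φ.destrict

/-- `φ` is δ-robust: truth of the δ-weakening implies truth of `φ`. -/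
def RFormula.Robust (δ : ℝ) (φ : RFormula S) : Prop :=
  (φ.weaken δ).IsTrue → φ.IsTrue

/-- All functions of the signature are continuous. -/
def Sig.ContinuousFuns (S : Sig) : Prop :=
  ∀ (k : ℕ) (f : (Fin k → ℝ) → ℝ), f ∈ S.mem k → Continuous f

/-- The translation `α`: atoms give the (shifted) term value, `∧ ↦ min`, `∨ ↦ max`,
`∃x∈[u,v] ↦ max over the interval`, `∀x∈[u,v] ↦ min over the interval` (the extrema
are expressed via `sSup`/`sInf` of the image; when all functions of the signature are
continuous they are attained, the intervals being nonempty and compact). -/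
noncomputable def RFormula.alpha : RFormula S → (ℕ → ℝ) → ℝ
  | .gt t c, σ => t.eval σ - c
  | .ge t c, σ => t.eval σ - c
  | .and φ ψ, σ => min (φ.alpha σ) (ψ.alpha σ)
  | .or φ ψ, σ => max (φ.alpha σ) (ψ.alpha σ)
  | .ex x u v φ, σ =>
      sSup ((fun a => φ.alpha (Function.update σ x a)) '' Set.uIcc (u.eval σ) (v.eval σ))
  | .all x u v φ, σ =>
      sInf ((fun a => φ.alpha (Function.update σ x a)) '' Set.uIcc (u.eval σ) (v.eval σ))

/-!
Induction on `φ`, simultaneously for all assignments. Atoms, `∧` and `∨` are immediate. For a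
bounded quantifier, `de(φ^{+δ})` says that some (every) point of a nonempty compact interval
satisfies `δ ≤ α`, which amounts to `δ ≤ max α` (`δ ≤ min α`) because `α` is continuous in the
assignment, so its extrema over the interval are attained. That continuity is itself proved by
induction; the extremum over an interval whose endpoints move continuously is an extremum over
the fixed interval `[0, 1]` after reparametrising by `AffineMap.lineMap`.
-/

open Set Function

theorem IsCompact.le_sSup_iff_of_continuous {α β : Type*} [ConditionallyCompleteLinearOrder α]
    [TopologicalSpace α] [ClosedIciTopology α] [TopologicalSpace β] {f : β → α} {K : Set β}
    (hK : IsCompact K) (h0K : K.Nonempty) (hf : ContinuousOn f K) (y : α) :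
    y ≤ sSup (f '' K) ↔ ∃ x ∈ K, y ≤ f x := by
  simpa using not_congr (hK.sSup_lt_iff_of_continuous h0K hf y)

theorem IsCompact.le_sInf_iff_of_continuous {α β : Type*} [ConditionallyCompleteLinearOrder α]
    [TopologicalSpace α] [ClosedIicTopology α] [TopologicalSpace β] {f : β → α} {K : Set β}
    (hK : IsCompact K) (h0K : K.Nonempty) (hf : ContinuousOn f K) (y : α) :
    y ≤ sInf (f '' K) ↔ ∀ x ∈ K, y ≤ f x := by
  rw [le_csInf_iff (hK.bddBelow_image hf) (h0K.image f), forall_mem_image]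

theorem uIcc_eq_image_lineMap (a b : ℝ) : uIcc a b = AffineMap.lineMap a b '' Icc (0 : ℝ) 1 := by
  rw [← segment_eq_uIcc, segment_eq_image_lineMap]

section MovingInterval

variable {X α : Type*} [TopologicalSpace X] [TopologicalSpace α] {F : X → ℝ → α} {u v : X → ℝ}

theorem continuous_lineMap_reparam (hF : Continuous ↿F) (hu : Continuous u)
    (hv : Continuous v) :
    Continuous ↿fun x (t : ℝ) => F x (AffineMap.lineMap (u x) (v x) t) :=
  hF.comp (continuous_fst.prodMk
    ((hu.comp continuous_fst).lineMap (hv.comp continuous_fst) continuous_snd))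

variable [ConditionallyCompleteLinearOrder α] [OrderTopology α]

theorem continuous_sSup_image_uIcc (hF : Continuous ↿F) (hu : Continuous u)
    (hv : Continuous v) : Continuous fun x => sSup (F x '' uIcc (u x) (v x)) := by
  simp_rw [uIcc_eq_image_lineMap, image_image]
  exact isCompact_Icc.continuous_sSup (continuous_lineMap_reparam hF hu hv)

theorem continuous_sInf_image_uIcc (hF : Continuous ↿F) (hu : Continuous u)
    (hv : Continuous v) : Continuous fun x => sInf (F x '' uIcc (u x) (v x)) := by
  simp_rw [uIcc_eq_image_lineMap, image_image]
  exact isCompact_Icc.continuous_sInf (continuous_lineMap_reparam hF hu hv)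

end MovingInterval

theorem RTerm.continuous_eval (hS : S.ContinuousFuns) (t : RTerm S) :
    Continuous fun σ => t.eval σ := by
  induction t with
  | var n => exact continuous_apply n
  | app k f hf ts ih => exact (hS k f hf).comp (continuous_pi ih)

theorem RFormula.continuous_alpha (hS : S.ContinuousFuns) (φ : RFormula S) :
    Continuous fun σ => φ.alpha σ := by
  induction φ with
  | gt t c | ge t c => exact (t.continuous_eval hS).sub continuous_const
  | and φ ψ ihφ ihψ => exact ihφ.min ihψ
  | or φ ψ ihφ ihψ => exact ihφ.max ihψ
  | ex x u v φ ih =>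
    exact continuous_sSup_image_uIcc (ih.comp (continuous_fst.update x continuous_snd))
      (u.continuous_eval hS) (v.continuous_eval hS)
  | all x u v φ ih =>
    exact continuous_sInf_image_uIcc (ih.comp (continuous_fst.update x continuous_snd))
      (u.continuous_eval hS) (v.continuous_eval hS)

theorem RFormula.continuousOn_alpha_update (hS : S.ContinuousFuns) (φ : RFormula S)
    (σ : ℕ → ℝ) (x : ℕ) (K : Set ℝ) : ContinuousOn (fun a => φ.alpha (update σ x a)) K :=
  ((φ.continuous_alpha hS).comp (continuous_const.update x continuous_id)).continuousOn

theorem RFormula.holds_destrict_strengthen_iff (hS : S.ContinuousFuns) (δ : ℝ)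
    (φ : RFormula S) (σ : ℕ → ℝ) :
    ((φ.strengthen δ).destrict).Holds σ ↔ δ ≤ φ.alpha σ := by
  induction φ generalizing σ with
  | gt t c | ge t c =>
    simp only [strengthen, destrict, Holds, alpha]
    constructor <;> intro h <;> linarith
  | and φ ψ ihφ ihψ => simp only [strengthen, destrict, Holds, alpha, le_min_iff, ihφ, ihψ]
  | or φ ψ ihφ ihψ => simp only [strengthen, destrict, Holds, alpha, le_max_iff, ihφ, ihψ]
  | ex x u v φ ih =>
    simp only [strengthen, destrict, Holds, alpha, ih]
    exact (isCompact_uIcc.le_sSup_iff_of_continuous nonempty_uIcc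
      (φ.continuousOn_alpha_update hS σ x _) δ).symm
  | all x u v φ ih =>
    simp only [strengthen, destrict, Holds, alpha, ih]
    exact (isCompact_uIcc.le_sInf_iff_of_continuous nonempty_uIcc
      (φ.continuousOn_alpha_update hS σ x _) δ).symm

theorem destrict_strengthen_iff_alpha_ge_general (S : Sig) (hS : S.ContinuousFuns)
    (φ : RFormula S) (δ : ℝ) :
    ((φ.strengthen δ).destrict).IsTrue ↔ φ.alpha (fun _ => 0) ≥ δ :=
  φ.holds_destrict_strengthen_iff hS δ (fun _ => 0)

theorem destrict_strengthen_iff_alpha_ge (S : Sig) (hS : S.ContinuousFuns)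
    (φ : RFormula S) (hφ : φ.IsBoundedSentence) (δ : ℝ) (hδ : 0 ≤ δ) :
    ((φ.strengthen δ).destrict).IsTrue ↔ φ.alpha (fun _ => 0) ≥ δ :=
  destrict_strengthen_iff_alpha_ge_general S hS φ δ
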